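/- arXiv:2509.17687 — 5 statements merged into one kernel-verified Lean document; each statement's English description precedes it below -/
import Mathlib

section
/- Let (A_n)_{n∈ℕ} and A be self-adjoint operators on a complex separable Hilbert space H. If there exists λ⋆ ∈ ℂ ∖ ℝ such that R_{λ⋆}(A_n)u converges to R_{λ⋆}(A)u weakly in H for every u ∈ H, as n → +∞, then R_{λ⋆}(A_n)u converges to R_{λ⋆}(A)u strongly in H for every u ∈ H. -/
open Filter Topology
open scoped ComplexInnerProductSpace LinearPMap

noncomputable section

variable {H : Type*} [NormedAddCommGroup H] [InnerProductSpace ℂ H] [CompleteSpace H]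

/-- `lam` belongs to the resolvent set of the (unbounded, partially defined) operator `A`:
`A - lam·I : Dom(A) → H` is a bijection with bounded inverse. -/
def InResolventSet (A : H →ₗ.[ℂ] H) (lam : ℂ) : Prop :=
  Function.Bijective (fun u : A.domain => A u - lam • (u : H)) ∧
    ∃ C : ℝ, ∀ u : A.domain, ‖(u : H)‖ ≤ C * ‖A u - lam • (u : H)‖

/-- `R` is the resolvent `(A - lam·I)⁻¹` of `A` at `lam`, as a bounded operator on `H`:
it is a two-sided inverse of `A - lam·I : Dom(A) → H`. -/
def IsResolvent (A : H →ₗ.[ℂ] H) (lam : ℂ) (R : H →L[ℂ] H) : Prop :=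
  (∀ f : H, ∃ h : R f ∈ A.domain, A ⟨R f, h⟩ - lam • R f = f) ∧
    ∀ u : A.domain, R (A u - lam • (u : H)) = u

/-- Key identity: if `T` is self-adjoint and `R` is its resolvent at `lam`, then
`(conj lam - lam) * ⟪R u, R u⟫ = ⟪R u, u⟫ - ⟪u, R u⟫`. -/
lemma resolvent_inner_self_identity (T : H →ₗ.[ℂ] H) (hT : IsSelfAdjoint T)
    (lam : ℂ) (R : H →L[ℂ] H) (hR : IsResolvent T lam R) (u : H) :
    ((starRingEnd ℂ) lam - lam) * ⟪R u, R u⟫ = ⟪R u, u⟫ - ⟪u, R u⟫ := by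
  have hd : Dense (T.domain : Set H) := hT.dense_domain
  have hadj : T† = T := LinearPMap.isSelfAdjoint_def.mp hT
  have hfa : T.IsFormalAdjoint T := by
    have h := LinearPMap.adjoint_isFormalAdjoint hd
    rwa [hadj] at h
  obtain ⟨hmem, hx⟩ := hR.1 u
  set x : T.domain := ⟨R u, hmem⟩ with hxdef
  have hxu : T x - lam • (x : H) = u := hx
  have hsymm : ⟪T x, (x : H)⟫ = ⟪(x : H), T x⟫ := hfa x x
  have h1 : ⟪(x : H), u⟫ = ⟪(x : H), T x⟫ - lam * ⟪(x : H), (x : H)⟫ := by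
    rw [← hxu, inner_sub_right, inner_smul_right]
  have h2 : ⟪u, (x : H)⟫ = ⟪T x, (x : H)⟫ - (starRingEnd ℂ) lam * ⟪(x : H), (x : H)⟫ := by
    rw [← hxu, inner_sub_left, inner_smul_left]
  have hcoe : (x : H) = R u := rfl
  rw [← hcoe, h1, h2, hsymm]
  ring

/-- Weak resolvent convergence at a nonreal point implies strong resolvent convergence
there, for self-adjoint operators. -/
theorem strongResolventConv_of_weakResolventConv
    {H : Type*} [NormedAddCommGroup H] [InnerProductSpace ℂ H] [CompleteSpace H]
    [TopologicalSpace.SeparableSpace H]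
    (A : ℕ → H →ₗ.[ℂ] H) (B : H →ₗ.[ℂ] H)
    (hA : ∀ n, IsSelfAdjoint (A n)) (hB : IsSelfAdjoint B)
    (lamStar : ℂ) (hlamStar : lamStar.im ≠ 0)
    (R : ℕ → H →L[ℂ] H) (S : H →L[ℂ] H)
    (hR : ∀ n, IsResolvent (A n) lamStar (R n)) (hS : IsResolvent B lamStar S)
    (hweak : ∀ u v : H, Tendsto (fun n => ⟪R n u, v⟫) atTop (𝓝 ⟪S u, v⟫)) :
    ∀ u : H, Tendsto (fun n => R n u) atTop (𝓝 (S u)) := by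
  intro u
  set c : ℂ := (starRingEnd ℂ) lamStar - lamStar with hc
  have hcne : c ≠ 0 := by
    simp only [hc, sub_ne_zero]
    intro h
    apply hlamStar
    have := congrArg Complex.im h
    simp [Complex.conj_im] at this
    linarith
  -- convergence of ⟪R n u, u⟫ and ⟪u, R n u⟫
  have h1 : Tendsto (fun n => ⟪R n u, u⟫) atTop (𝓝 ⟪S u, u⟫) := hweak u u
  have h2 : Tendsto (fun n => ⟪u, R n u⟫) atTop (𝓝 ⟪u, S u⟫) := by
    have := (Complex.continuous_conj.tendsto _).comp h1
    simpa [Function.comp_def, inner_conj_symm] using this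
  -- convergence of ⟪R n u, R n u⟫ to ⟪S u, S u⟫
  have h3 : Tendsto (fun n => ⟪R n u, R n u⟫) atTop (𝓝 ⟪S u, S u⟫) := by
    have h4 : Tendsto (fun n => c⁻¹ * (⟪R n u, u⟫ - ⟪u, R n u⟫)) atTop
        (𝓝 (c⁻¹ * (⟪S u, u⟫ - ⟪u, S u⟫))) := (h1.sub h2).const_mul _
    have heq : ∀ n, c⁻¹ * (⟪R n u, u⟫ - ⟪u, R n u⟫) = ⟪R n u, R n u⟫ := by
      intro n
      rw [← resolvent_inner_self_identity (A n) (hA n) lamStar (R n) (hR n) u]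
      field_simp
      rw [hc]
    have heqS : c⁻¹ * (⟪S u, u⟫ - ⟪u, S u⟫) = ⟪S u, S u⟫ := by
      rw [← resolvent_inner_self_identity B hB lamStar S hS u]
      field_simp
      rw [hc]
    simpa [heq, heqS] using h4
  have hnorm : Tendsto (fun n => ‖R n u‖ ^ 2) atTop (𝓝 (‖S u‖ ^ 2)) := by
    have := (RCLike.continuous_re.tendsto _).comp h3
    simpa only [Function.comp_def, inner_self_eq_norm_sq] using this
  -- inner product term
  have h5 : Tendsto (fun n => RCLike.re ⟪R n u, S u⟫) atTop (𝓝 (RCLike.re ⟪S u, S u⟫)) :=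
    (RCLike.continuous_re.tendsto _).comp (hweak u (S u))
  have hsq : Tendsto (fun n => ‖R n u - S u‖ ^ 2) atTop (𝓝 0) := by
    have key : ∀ n, ‖R n u - S u‖ ^ 2
        = ‖R n u‖ ^ 2 - 2 * RCLike.re ⟪R n u, S u⟫ + ‖S u‖ ^ 2 := fun n =>
      norm_sub_sq (𝕜 := ℂ) _ _
    have lim : Tendsto (fun n => ‖R n u‖ ^ 2 - 2 * RCLike.re ⟪R n u, S u⟫ + ‖S u‖ ^ 2)
        atTop (𝓝 (‖S u‖ ^ 2 - 2 * RCLike.re ⟪S u, S u⟫ + ‖S u‖ ^ 2)) :=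
      (hnorm.sub (h5.const_mul 2)).add tendsto_const_nhds
    have hz : ‖S u‖ ^ 2 - 2 * RCLike.re ⟪S u, S u⟫ + ‖S u‖ ^ 2 = 0 := by
      rw [inner_self_eq_norm_sq]
      ring
    rw [← hz]
    simpa [key] using lim
  have hn : Tendsto (fun n => ‖R n u - S u‖) atTop (𝓝 0) := by
    have := hsq.sqrt
    simpa [Real.sqrt_sq (norm_nonneg _)] using this
  rw [tendsto_iff_norm_sub_tendsto_zero]
  exact hn
end
end

section
/- Let (A_n)_{n∈ℕ} and A be bounded self-adjoint operators defined on all of a complex separable Hilbert space H, with sup_n ‖A_n‖ < +∞. If A_n converges to A weakly (i.e. ⟨A_n u, v⟩ → ⟨A u, v⟩ for all u, v ∈ H) but A_n does not converge to A strongly, then A_n does not converge to A in the weak resolvent sense. -/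
open Filter Topology
open scoped ComplexInnerProductSpace

noncomputable section

variable {H : Type*} [NormedAddCommGroup H] [InnerProductSpace ℂ H] [CompleteSpace H]

/-- `R` is the resolvent `(A - lam·I)⁻¹` of the (everywhere-defined, bounded) operator `A`
at `lam`, i.e. a two-sided inverse of `A - lam·I`. -/
def IsResolventCLM (A : H →L[ℂ] H) (lam : ℂ) (R : H →L[ℂ] H) : Prop :=
  (∀ f : H, A (R f) - lam • R f = f) ∧ ∀ u : H, R (A u - lam • u) = u

/-- A self-adjoint bounded operator has a resolvent at `I`. -/
lemma exists_isResolventCLM_I (T : H →L[ℂ] H) (hT : IsSelfAdjoint T) :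
    ∃ R : H →L[ℂ] H, IsResolventCLM T Complex.I R := by
  have hI : Complex.I ∉ spectrum ℂ T := fun h => by
    simpa using hT.im_eq_zero_of_mem_spectrum h
  have hu : IsUnit (algebraMap ℂ (H →L[ℂ] H) Complex.I - T) :=
    spectrum.notMem_iff.mp hI
  obtain ⟨U, hU⟩ := hu
  have happly : ∀ x : H, (algebraMap ℂ (H →L[ℂ] H) Complex.I - T) x = Complex.I • x - T x := by
    intro x
    simp [Algebra.algebraMap_eq_smul_one, ContinuousLinearMap.sub_apply,
      ContinuousLinearMap.smul_apply, ContinuousLinearMap.one_apply]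
  refine ⟨-(U⁻¹ : (H →L[ℂ] H)ˣ), ?_, ?_⟩
  · intro f
    have hmul : (algebraMap ℂ (H →L[ℂ] H) Complex.I - T) * (U⁻¹ : (H →L[ℂ] H)ˣ) = 1 := by
      rw [← hU]; exact U.mul_inv
    have h1 := congrArg (fun M : H →L[ℂ] H => M f) hmul
    simp only [ContinuousLinearMap.mul_apply, ContinuousLinearMap.one_apply] at h1
    rw [happly] at h1
    show T ((-((U⁻¹ : (H →L[ℂ] H)ˣ) : H →L[ℂ] H)) f)
        - Complex.I • ((-((U⁻¹ : (H →L[ℂ] H)ˣ) : H →L[ℂ] H)) f) = f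
    simp only [ContinuousLinearMap.neg_apply, map_neg, smul_neg]
    rw [sub_neg_eq_add, neg_add_eq_sub]
    exact h1
  · intro u
    have hmul : ((U⁻¹ : (H →L[ℂ] H)ˣ) : H →L[ℂ] H)
        * (algebraMap ℂ (H →L[ℂ] H) Complex.I - T) = 1 := by
      rw [← hU]; exact U.inv_mul
    have h2 := congrArg (fun M : H →L[ℂ] H => M u) hmul
    simp only [ContinuousLinearMap.mul_apply, ContinuousLinearMap.one_apply] at h2
    rw [happly] at h2
    show (-((U⁻¹ : (H →L[ℂ] H)ˣ) : H →L[ℂ] H)) (T u - Complex.I • u) = u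
    simp only [ContinuousLinearMap.neg_apply]
    rw [show T u - Complex.I • u = -(Complex.I • u - T u) by abel, map_neg, neg_neg, h2]

/-- Key identity: for self-adjoint `T` with resolvent `R` at `I`,
`⟪u, R u⟫ - ⟪R u, u⟫ = 2 I ⟪R u, R u⟫`. -/
lemma resolvent_inner_id {T R : H →L[ℂ] H} (hT : IsSelfAdjoint T)
    (hR : IsResolventCLM T Complex.I R) (u : H) :
    ⟪u, R u⟫ - ⟪R u, u⟫ = 2 * Complex.I * ⟪R u, R u⟫ := by
  have hv : T (R u) - Complex.I • R u = u := hR.1 u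
  have hsym : ⟪T (R u), R u⟫ = ⟪R u, T (R u)⟫ := hT.isSymmetric (R u) (R u)
  calc ⟪u, R u⟫ - ⟪R u, u⟫
      = ⟪T (R u) - Complex.I • R u, R u⟫ - ⟪R u, T (R u) - Complex.I • R u⟫ := by rw [hv]
    _ = (⟪T (R u), R u⟫ + Complex.I * ⟪R u, R u⟫)
        - (⟪R u, T (R u)⟫ - Complex.I * ⟪R u, R u⟫) := by
        rw [inner_sub_left, inner_sub_right, inner_smul_left, inner_smul_right,
          Complex.conj_I]
        ring
    _ = 2 * Complex.I * ⟪R u, R u⟫ := by rw [hsym]; ring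

/-- Uniformly bounded self-adjoint operators converging weakly but not strongly do not
converge in the weak resolvent sense. -/
theorem not_weakResolventConv_of_weak_not_strong
    {H : Type*} [NormedAddCommGroup H] [InnerProductSpace ℂ H] [CompleteSpace H]
    [TopologicalSpace.SeparableSpace H]
    (A : ℕ → H →L[ℂ] H) (B : H →L[ℂ] H)
    (hA : ∀ n, IsSelfAdjoint (A n)) (hB : IsSelfAdjoint B)
    (hbdd : ∃ C : ℝ, ∀ n, ‖A n‖ ≤ C)
    (hweak : ∀ u v : H, Tendsto (fun n => ⟪A n u, v⟫) atTop (𝓝 ⟪B u, v⟫))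
    (hnotstrong : ¬ ∀ u : H, Tendsto (fun n => A n u) atTop (𝓝 (B u))) :
    ¬ (∀ lam : ℂ, lam.im ≠ 0 → ∀ (R : ℕ → H →L[ℂ] H) (S : H →L[ℂ] H),
        (∀ n, IsResolventCLM (A n) lam (R n)) → IsResolventCLM B lam S →
          ∀ u v : H, Tendsto (fun n => ⟪R n u, v⟫) atTop (𝓝 ⟪S u, v⟫)) := by
  intro h
  obtain ⟨C, hC⟩ := hbdd
  choose R hR using fun n => exists_isResolventCLM_I (A n) (hA n)
  obtain ⟨S, hS⟩ := exists_isResolventCLM_I B hB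
  have hw : ∀ u v : H, Tendsto (fun n => ⟪R n u, v⟫) atTop (𝓝 ⟪S u, v⟫) :=
    h Complex.I (by simp) R S hR hS
  -- Step 1: strong convergence of the resolvents.
  have hstrongR : ∀ u : H, Tendsto (fun n => R n u) atTop (𝓝 (S u)) := by
    intro u
    -- the inner products ⟪R n u - S u, R n u - S u⟫ tend to 0
    have hc : Tendsto (fun n => ⟪R n u - S u, R n u - S u⟫) atTop (𝓝 0) := by
      have ha : Tendsto (fun n => ⟪R n u, u⟫) atTop (𝓝 ⟪S u, u⟫) := hw u u
      have hb : Tendsto (fun n => ⟪R n u, S u⟫) atTop (𝓝 ⟪S u, S u⟫) := hw u (S u)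
      have hca : Tendsto (fun n => (starRingEnd ℂ) ⟪R n u, u⟫) atTop
          (𝓝 ((starRingEnd ℂ) ⟪S u, u⟫)) := (Complex.continuous_conj.tendsto _).comp ha
      have hcb : Tendsto (fun n => (starRingEnd ℂ) ⟪R n u, S u⟫) atTop
          (𝓝 ((starRingEnd ℂ) ⟪S u, S u⟫)) := (Complex.continuous_conj.tendsto _).comp hb
      have key : ∀ n, ⟪R n u - S u, R n u - S u⟫ =
          ((starRingEnd ℂ) ⟪R n u, u⟫ - ⟪R n u, u⟫) / (2 * Complex.I)
            - ⟪R n u, S u⟫ - (starRingEnd ℂ) ⟪R n u, S u⟫ + ⟪S u, S u⟫ := by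
        intro n
        have hid := resolvent_inner_id (hA n) (hR n) u
        have h2I : (2 * Complex.I) ≠ 0 := by simp [Complex.I_ne_zero]
        have hRR : ⟪R n u, R n u⟫ =
            ((starRingEnd ℂ) ⟪R n u, u⟫ - ⟪R n u, u⟫) / (2 * Complex.I) := by
          rw [eq_div_iff h2I, inner_conj_symm, hid]; ring
        have hsr : ⟪S u, R n u⟫ = (starRingEnd ℂ) ⟪R n u, S u⟫ :=
          (inner_conj_symm (S u) (R n u)).symm
        rw [inner_sub_left, inner_sub_right, inner_sub_right, hRR, hsr]
        ring
      have hlim : Tendsto (fun n =>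
          ((starRingEnd ℂ) ⟪R n u, u⟫ - ⟪R n u, u⟫) / (2 * Complex.I)
            - ⟪R n u, S u⟫ - (starRingEnd ℂ) ⟪R n u, S u⟫ + ⟪S u, S u⟫)
          atTop (𝓝 (((starRingEnd ℂ) ⟪S u, u⟫ - ⟪S u, u⟫) / (2 * Complex.I)
            - ⟪S u, S u⟫ - (starRingEnd ℂ) ⟪S u, S u⟫ + ⟪S u, S u⟫)) := by
        exact ((((hca.sub ha).div_const _).sub hb).sub hcb).add tendsto_const_nhds
      have hL : ((starRingEnd ℂ) ⟪S u, u⟫ - ⟪S u, u⟫) / (2 * Complex.I)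
            - ⟪S u, S u⟫ - (starRingEnd ℂ) ⟪S u, S u⟫ + ⟪S u, S u⟫ = 0 := by
        have hid := resolvent_inner_id hB hS u
        have h2I : (2 * Complex.I) ≠ 0 := by simp [Complex.I_ne_zero]
        have h1 : ((starRingEnd ℂ) ⟪S u, u⟫ - ⟪S u, u⟫) / (2 * Complex.I) = ⟪S u, S u⟫ := by
          rw [div_eq_iff h2I, inner_conj_symm, hid]; ring
        rw [h1, inner_conj_symm]
        ring
      have hlim' := hlim.congr fun n => (key n).symm
      rwa [hL] at hlim'
    -- extract norm convergence
    have hsq : Tendsto (fun n => ‖R n u - S u‖ ^ 2) atTop (𝓝 0) := by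
      have := (Complex.continuous_re.tendsto (0 : ℂ)).comp hc
      simp only [Complex.zero_re] at this
      refine this.congr fun n => ?_
      simp [Function.comp, inner_self_eq_norm_sq_to_K, ← Complex.ofReal_pow]
    have hnorm : Tendsto (fun n => ‖R n u - S u‖) atTop (𝓝 0) := by
      have := (Real.continuous_sqrt.tendsto (0 : ℝ)).comp hsq
      simp only [Real.sqrt_zero] at this
      refine this.congr fun n => ?_
      simp [Function.comp, Real.sqrt_sq (norm_nonneg _)]
    exact tendsto_iff_norm_sub_tendsto_zero.mpr hnorm
  -- Step 2: strong convergence of the operators, contradiction.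
  apply hnotstrong
  intro u
  set f : H := B u - Complex.I • u with hf
  have hSu : S f = u := hS.2 u
  have hRf : Tendsto (fun n => R n f) atTop (𝓝 u) := hSu ▸ hstrongR f
  rw [tendsto_iff_norm_sub_tendsto_zero]
  have hkey : ∀ n, A n u - B u = Complex.I • (R n f - u) + A n (u - R n f) := by
    intro n
    have h1 : A n (R n f) = f + Complex.I • R n f := eq_add_of_sub_eq ((hR n).1 f)
    have h3 : B u = f + Complex.I • u := by
      have h4 := hS.1 f
      rw [hSu] at h4
      exact eq_add_of_sub_eq h4
    have h2 : A n (R n f) + A n (u - R n f) = A n u := by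
      rw [← map_add]; congr 1; abel
    rw [← h2, h1, h3, smul_sub]
    abel
  have hb : ∀ n, ‖A n u - B u‖ ≤ (1 + C) * ‖R n f - u‖ := by
    intro n
    have hC0 : (0 : ℝ) ≤ C := le_trans (norm_nonneg _) (hC 0)
    rw [hkey n]
    calc ‖Complex.I • (R n f - u) + A n (u - R n f)‖
        ≤ ‖Complex.I • (R n f - u)‖ + ‖A n (u - R n f)‖ := norm_add_le _ _
      _ ≤ ‖R n f - u‖ + C * ‖u - R n f‖ := by
          gcongr
          · rw [norm_smul, Complex.norm_I, one_mul]
          · exact le_trans ((A n).le_opNorm _)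
              (mul_le_mul_of_nonneg_right (hC n) (norm_nonneg _))
      _ = (1 + C) * ‖R n f - u‖ := by rw [norm_sub_rev u]; ring
  have hz : Tendsto (fun n => (1 + C) * ‖R n f - u‖) atTop (𝓝 0) := by
    have := (tendsto_iff_norm_sub_tendsto_zero.mp hRf).const_mul (1 + C)
    simpa using this
  exact squeeze_zero (fun n => norm_nonneg _) hb hz
end
end

section
/- Let (A_n)_{n∈ℕ} and A be self-adjoint operators on a complex separable Hilbert space H. If A_n converges to A in the strong resolvent sense, then σ(A) ⊆ lim_{n→+∞} σ(A_n), meaning that for every λ ∈ σ(A) there exists a sequence λ_n ∈ σ(A_n) with λ_n → λ. -/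
open Filter Topology
open scoped ComplexInnerProductSpace

noncomputable section

variable {H : Type*} [NormedAddCommGroup H] [InnerProductSpace ℂ H] [CompleteSpace H]

/-- `A n` converges to `B` in the norm resolvent sense. -/
def NormResolventConv (A : ℕ → H →ₗ.[ℂ] H) (B : H →ₗ.[ℂ] H) : Prop :=
  ∀ lam : ℂ, lam.im ≠ 0 → ∀ (R : ℕ → H →L[ℂ] H) (S : H →L[ℂ] H),
    (∀ n, IsResolvent (A n) lam (R n)) → IsResolvent B lam S →
      Tendsto (fun n => ‖R n - S‖) atTop (𝓝 0)

/-- `A n` converges to `B` in the strong resolvent sense. -/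
def StrongResolventConv (A : ℕ → H →ₗ.[ℂ] H) (B : H →ₗ.[ℂ] H) : Prop :=
  ∀ lam : ℂ, lam.im ≠ 0 → ∀ (R : ℕ → H →L[ℂ] H) (S : H →L[ℂ] H),
    (∀ n, IsResolvent (A n) lam (R n)) → IsResolvent B lam S →
      ∀ u : H, Tendsto (fun n => R n u) atTop (𝓝 (S u))

section AuxiliaryLemmas
open scoped ENNReal NNReal
variable {A : H →ₗ.[ℂ] H}

lemma sa_symm (hA : IsSelfAdjoint A) (u v : A.domain) :
    ⟪A u, (v : H)⟫ = ⟪(u : H), A v⟫ := by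
  have hd := hA.dense_domain
  have h := LinearPMap.adjoint_isFormalAdjoint hd
  rw [LinearPMap.isSelfAdjoint_def] at hA
  rw [hA] at h
  exact h u v

lemma sa_mem (hA : IsSelfAdjoint A) {u g : H}
    (hu : ∀ v : A.domain, ⟪g, (v : H)⟫ = ⟪u, A v⟫) :
    ∃ hm : u ∈ A.domain, A ⟨u, hm⟩ = g := by
  have hd := hA.dense_domain
  have hA' : A.adjoint = A := hA
  have hm' : u ∈ A.adjoint.domain := LinearPMap.mem_adjoint_domain_of_exists u ⟨g, hu⟩
  have happ : A.adjoint ⟨u, hm'⟩ = g := LinearPMap.adjoint_apply_eq hd _ (fun v => hu v)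
  obtain ⟨hdom, hval⟩ := LinearPMap.ext_iff.mp hA'
  have hm : u ∈ A.domain := hdom ▸ hm'
  refine ⟨hm, ?_⟩
  rw [← happ]
  exact (hval (x := u) (hf := hm') (hg := hm)).symm

lemma sa_lower (hA : IsSelfAdjoint A) (z : ℂ) (u : A.domain) :
    |z.im| * ‖(u : H)‖ ≤ ‖A u - z • (u : H)‖ := by
  have hreal : (⟪A u, (u : H)⟫).im = 0 := by
    have h1 : (starRingEnd ℂ) ⟪A u, (u : H)⟫ = ⟪A u, (u : H)⟫ := by
      rw [inner_conj_symm]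
      exact (sa_symm hA u u).symm
    have := Complex.conj_eq_iff_im.mp h1
    exact this
  set x : H := A u - (z.re : ℂ) • (u : H) with hx
  have hdecomp : A u - z • (u : H) = x - ((z.im : ℂ) * Complex.I) • (u : H) := by
    have h7 : ((z.re : ℂ) • (u : H)) + ((z.im : ℂ) * Complex.I) • (u : H) = z • (u : H) := by
      rw [← add_smul, Complex.re_add_im]
    rw [hx, sub_sub, h7]
  have hcross : (⟪x, (u : H)⟫).im = 0 := by
    rw [hx, inner_sub_left, inner_smul_left]
    have h0 : (⟪(u : H), (u : H)⟫).im = 0 := inner_self_im (𝕜 := ℂ) (u : H)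
    simp [Complex.sub_im, Complex.mul_im, hreal, h0, ← Complex.ofReal_pow]
  have hsq : ‖A u - z • (u : H)‖ ^ 2 = ‖x‖ ^ 2 + (|z.im| * ‖(u : H)‖) ^ 2 := by
    rw [hdecomp, @norm_sub_sq ℂ]
    have h2 : ⟪x, ((z.im : ℂ) * Complex.I) • (u : H)⟫ = ((z.im : ℂ) * Complex.I) * ⟪x, (u : H)⟫ :=
      inner_smul_right _ _ _
    have h3 : Complex.re ⟪x, ((z.im : ℂ) * Complex.I) • (u : H)⟫ = 0 := by
      rw [h2]
      simp [Complex.mul_re, hcross]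
    have h4 : ‖((z.im : ℂ) * Complex.I) • (u : H)‖ = |z.im| * ‖(u : H)‖ := by
      rw [norm_smul]
      simp [Complex.norm_def, Complex.normSq_mk]
    rw [h4]
    simp only [RCLike.re_to_complex] at h3 ⊢
    rw [h3]
    ring
  have h5 : (|z.im| * ‖(u : H)‖) ^ 2 ≤ ‖A u - z • (u : H)‖ ^ 2 := by
    rw [hsq]; nlinarith [sq_nonneg ‖x‖]
  have h6 : 0 ≤ |z.im| * ‖(u : H)‖ := by positivity
  nlinarith [norm_nonneg (A u - z • (u : H))]

/-- `A - z` as a linear map on the domain. -/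
def Tl (A : H →ₗ.[ℂ] H) (z : ℂ) : A.domain →ₗ[ℂ] H :=
  A.toFun - z • A.domain.subtype

lemma Tl_apply (z : ℂ) (u : A.domain) : Tl A z u = A u - z • (u : H) := rfl

lemma inResolventSet_of_lower (hA : IsSelfAdjoint A) (z : ℂ) {c : ℝ} (hc : 0 < c)
    (hl : ∀ u : A.domain, c * ‖(u : H)‖ ≤ ‖A u - z • (u : H)‖)
    (hl' : ∀ u : A.domain, c * ‖(u : H)‖ ≤ ‖A u - (starRingEnd ℂ z) • (u : H)‖) :
    InResolventSet A z := by
  have hinj : Function.Injective (fun u : A.domain => A u - z • (u : H)) := by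
    intro u v huv
    have h1 : Tl A z (u - v) = 0 := by
      rw [map_sub]
      simpa [Tl_apply] using sub_eq_zero_of_eq huv
    have h2 := hl (u - v)
    rw [← Tl_apply, h1, norm_zero] at h2
    have h3 : ‖((u - v : A.domain) : H)‖ = 0 := le_antisymm (by nlinarith) (norm_nonneg _)
    have h4 : ((u - v : A.domain) : H) = 0 := norm_eq_zero.mp h3
    have : u - v = 0 := Subtype.ext (by simpa using h4)
    exact sub_eq_zero.mp this
  -- range of Tl is closed
  set V : Submodule ℂ H := LinearMap.range (Tl A z) with hV
  have hVc : IsClosed (V : Set H) := by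
    apply IsSeqClosed.isClosed
    intro fseq f hf hlim
    choose u hu using hf
    have hcf : CauchySeq fseq := hlim.cauchySeq
    have hcu : CauchySeq (fun n => ((u n : H))) := by
      rw [Metric.cauchySeq_iff] at hcf ⊢
      intro ε hε
      obtain ⟨N, hN⟩ := hcf (c * ε) (by positivity)
      refine ⟨N, fun m hm n hn => ?_⟩
      have h1 : Tl A z (u m - u n) = fseq m - fseq n := by
        rw [map_sub, hu, hu]
      have h2 := hl (u m - u n)
      rw [← Tl_apply, h1] at h2
      have h3 := hN m hm n hn
      rw [dist_eq_norm] at h3 ⊢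
      have h4 : ‖((u m - u n : A.domain) : H)‖ = ‖(u m : H) - (u n : H)‖ := by norm_cast
      rw [h4] at h2
      nlinarith
    obtain ⟨v, hv⟩ := cauchySeq_tendsto_of_complete hcu
    have hAu : ∀ n, A (u n) = fseq n + z • ((u n : H)) := by
      intro n
      have := hu n
      rw [Tl_apply] at this
      rw [← this]; abel
    have hAulim : Tendsto (fun n => A (u n)) atTop (𝓝 (f + z • v)) := by
      simp only [hAu]
      exact hlim.add (hv.const_smul z)
    have hmem := sa_mem hA (u := v) (g := f + z • v) (fun w => by
      have t1 : Tendsto (fun n => ⟪A (u n), (w : H)⟫) atTop (𝓝 ⟪f + z • v, (w : H)⟫) :=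
        (hAulim.inner tendsto_const_nhds)
      have t2 : Tendsto (fun n => ⟪A (u n), (w : H)⟫) atTop (𝓝 ⟪v, A w⟫) := by
        have : (fun n => ⟪A (u n), (w : H)⟫) = fun n => ⟪((u n : H)), A w⟫ := by
          funext n; exact sa_symm hA (u n) w
        rw [this]
        exact hv.inner tendsto_const_nhds
      exact tendsto_nhds_unique t1 t2)
    obtain ⟨hm, hval⟩ := hmem
    refine ⟨⟨v, hm⟩, ?_⟩
    rw [Tl_apply]
    show A ⟨v, hm⟩ - z • v = f
    rw [hval]; abel
  -- orthogonal complement of range is trivial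
  have hbot : Vᗮ = ⊥ := by
    rw [Submodule.eq_bot_iff]
    intro w hw
    have hw' : ∀ x : A.domain, ⟪w, (A x : H)⟫ = z * ⟪w, (x : H)⟫ := by
      intro x
      have h0 : ⟪Tl A z x, w⟫ = 0 := hw _ ⟨x, rfl⟩
      rw [Tl_apply, inner_sub_left, inner_smul_left, sub_eq_zero] at h0
      have := congrArg (starRingEnd ℂ) h0
      have h2 : z * ⟪w, (x : H)⟫ = ⟪w, (A x : H)⟫ := by
        have h2' : ⟪w, (A x : H)⟫ = z * ⟪w, (x : H)⟫ := by
          simpa [inner_conj_symm, mul_comm] using this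
        exact h2'.symm
      exact h2.symm
    have hmem := sa_mem hA (u := w) (g := (starRingEnd ℂ z) • w) (fun x => by
      rw [inner_smul_left, Complex.conj_conj]
      exact (hw' x).symm)
    obtain ⟨hm, hval⟩ := hmem
    have h3 := hl' ⟨w, hm⟩
    rw [hval] at h3
    simp only [sub_self, norm_zero] at h3
    have : ‖w‖ = 0 := le_antisymm (by nlinarith) (norm_nonneg _)
    exact norm_eq_zero.mp this
  haveI := hVc.completeSpace_coe
  have htop : V = ⊤ := Submodule.orthogonal_eq_bot_iff.mp hbot
  have hsurj : Function.Surjective (fun u : A.domain => A u - z • (u : H)) := by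
    intro f
    have hf : f ∈ V := htop ▸ Submodule.mem_top
    obtain ⟨u, hu⟩ := hf
    exact ⟨u, hu⟩
  refine ⟨⟨hinj, hsurj⟩, c⁻¹, fun u => ?_⟩
  have h9 := hl u
  rw [← mul_le_mul_iff_right₀ hc]
  calc c * ‖(u : H)‖ ≤ ‖A u - z • (u : H)‖ := h9
    _ = c * (c⁻¹ * ‖A u - z • (u : H)‖) := by field_simp

lemma exists_isResolvent_of_in {z : ℂ} (h : InResolventSet A z) :
    ∃ R : H →L[ℂ] H, IsResolvent A z R := by
  obtain ⟨hbij, C, hC⟩ := h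
  have hbij' : Function.Bijective (Tl A z) := hbij
  set e : A.domain ≃ₗ[ℂ] H := LinearEquiv.ofBijective (Tl A z) hbij' with he
  set R₀ : H →ₗ[ℂ] H := A.domain.subtype ∘ₗ (e.symm : H →ₗ[ℂ] A.domain) with hR₀
  have hR₀app : ∀ f : H, R₀ f = ((e.symm f : A.domain) : H) := fun f => rfl
  have hesymm : ∀ f : H, Tl A z (e.symm f) = f := fun f => e.apply_symm_apply f
  have hbound : ∀ f : H, ‖R₀ f‖ ≤ max C 0 * ‖f‖ := by
    intro f
    rw [hR₀app]
    have h1 := hC (e.symm f)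
    rw [← Tl_apply, hesymm] at h1
    have h2 : C * ‖f‖ ≤ max C 0 * ‖f‖ :=
      mul_le_mul_of_nonneg_right (le_max_left _ _) (norm_nonneg _)
    linarith
  set R : H →L[ℂ] H := R₀.mkContinuous (max C 0) hbound with hR
  have hRapp : ∀ f : H, R f = ((e.symm f : A.domain) : H) := fun f => rfl
  refine ⟨R, ⟨fun f => ?_, fun u => ?_⟩⟩
  · have hm : R f ∈ A.domain := by rw [hRapp]; exact (e.symm f).2
    refine ⟨hm, ?_⟩
    have : (⟨R f, hm⟩ : A.domain) = e.symm f := Subtype.ext (hRapp f)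
    rw [show (A ⟨R f, hm⟩ : H) - z • R f = Tl A z ⟨R f, hm⟩ from rfl, this, hesymm]
  · have : A u - z • (u : H) = e u := rfl
    rw [this, hRapp, e.symm_apply_apply]

lemma inResolventSet_nonreal (hA : IsSelfAdjoint A) {z : ℂ} (hz : z.im ≠ 0) :
    InResolventSet A z := by
  refine inResolventSet_of_lower hA z (c := |z.im|) (abs_pos.mpr hz)
    (fun u => sa_lower hA z u) (fun u => ?_)
  have := sa_lower hA (starRingEnd ℂ z) u
  simpa [Complex.conj_im] using this

lemma resolvent_inj {z : ℂ} {R : H →L[ℂ] H} (hR : IsResolvent A z R) {f : H}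
    (hf : R f = 0) : f = 0 := by
  obtain ⟨hm, heq⟩ := hR.1 f
  have h0 : (⟨R f, hm⟩ : A.domain) = 0 := Subtype.ext hf
  rw [← heq, h0, hf]
  simp

lemma resolvent_id {z w : ℂ} {R1 R2 : H →L[ℂ] H} (hR1 : IsResolvent A z R1)
    (hR2 : IsResolvent A w R2) (f : H) :
    R1 f = R2 f + (z - w) • R1 (R2 f) := by
  obtain ⟨hm, heq⟩ := hR2.1 f
  have h3 := hR1.2 ⟨R2 f, hm⟩
  have h4 : (A ⟨R2 f, hm⟩ : H) - z • R2 f = f + (w - z) • R2 f := by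
    have h5 : (A ⟨R2 f, hm⟩ : H) = f + w • R2 f := sub_eq_iff_eq_add.mp heq
    rw [h5]
    module
  rw [h4] at h3
  simp only [map_add, map_smul] at h3
  have h6 : R1 f = R2 f - (w - z) • R1 (R2 f) := eq_sub_of_add_eq h3
  rw [h6]
  module

lemma resolvent_sa (hA : IsSelfAdjoint A) {lam : ℂ} (hlam : lam.im = 0)
    {R : H →L[ℂ] H} (hR : IsResolvent A lam R) : IsSelfAdjoint R := by
  rw [ContinuousLinearMap.isSelfAdjoint_iff_isSymmetric]
  intro f g
  obtain ⟨hf, hfe⟩ := hR.1 f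
  obtain ⟨hg, hge⟩ := hR.1 g
  have hconj : starRingEnd ℂ lam = lam := Complex.conj_eq_iff_im.mpr hlam
  calc ⟪R f, g⟫ = ⟪R f, (A ⟨R g, hg⟩ : H) - lam • R g⟫ := by rw [hge]
    _ = ⟪R f, (A ⟨R g, hg⟩ : H)⟫ - lam * ⟪R f, R g⟫ := by
        rw [inner_sub_right, inner_smul_right]
    _ = ⟪(A ⟨R f, hf⟩ : H), (R g : H)⟫ - lam * ⟪R f, R g⟫ := by
        rw [sa_symm hA ⟨R f, hf⟩ ⟨R g, hg⟩]
    _ = ⟪(A ⟨R f, hf⟩ : H) - lam • R f, R g⟫ := by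
        rw [inner_sub_left, inner_smul_left, hconj]
    _ = ⟪f, R g⟫ := by rw [hfe]

lemma near_spectrum (hA : IsSelfAdjoint A) {lam : ℂ} (hlam : lam.im = 0) {r : ℝ}
    (hr : 0 < r) (w : A.domain) (hw : (w : H) ≠ 0)
    (hsmall : ‖A w - lam • (w : H)‖ < r * ‖(w : H)‖) :
    ∃ μ : ℂ, ¬ InResolventSet A μ ∧ dist μ lam ≤ r := by
  by_contra hcon
  push_neg at hcon
  have hres : ∀ μ : ℂ, dist μ lam ≤ r → InResolventSet A μ := by
    intro μ hμ
    by_contra h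
    exact absurd hμ (not_le.mpr (hcon μ h))
  obtain ⟨R, hR⟩ := exists_isResolvent_of_in (hres lam (by rw [dist_self]; exact hr.le))
  have hRsa : IsSelfAdjoint R := resolvent_sa hA hlam hR
  have hspec : ∀ ζ ∈ spectrum ℂ R, ‖ζ‖ ≤ 1 / r := by
    intro ζ hζ
    rcases eq_or_ne ζ 0 with h0 | h0
    · rw [h0, norm_zero]
      exact le_of_lt (one_div_pos.mpr hr)
    set ν : ℂ := lam + ζ⁻¹ with hν
    by_cases hin : InResolventSet A ν
    · exfalso
      obtain ⟨R2, hR2⟩ := exists_isResolvent_of_in hin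
      have hd : lam - ν = -ζ⁻¹ := by rw [hν]; ring
      have hd2 : ν - lam = ζ⁻¹ := by rw [hν]; ring
      have hRR2 : ∀ f, R (R2 f) = ζ • (R2 f - R f) := by
        intro f
        have h1 := resolvent_id hR hR2 f
        rw [hd] at h1
        calc R (R2 f) = ζ • (ζ⁻¹ • R (R2 f)) := by
              rw [smul_smul, mul_inv_cancel₀ h0, one_smul]
          _ = ζ • (R2 f - R f) := by
              rw [show R2 f - R f = ζ⁻¹ • R (R2 f) from by rw [h1]; module]
      have hR2R : ∀ f, R2 (R f) = ζ • (R2 f - R f) := by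
        intro f
        have h1 := resolvent_id hR2 hR f
        rw [hd2] at h1
        calc R2 (R f) = ζ • (ζ⁻¹ • R2 (R f)) := by
              rw [smul_smul, mul_inv_cancel₀ h0, one_smul]
          _ = ζ • (R2 f - R f) := by
              rw [show R2 f - R f = ζ⁻¹ • R2 (R f) from by rw [h1]; module]
      set G : H →L[ℂ] H := ζ⁻¹ • (1 + ζ⁻¹ • R2) with hGdef
      have hinv : ζ * ζ⁻¹ = 1 := mul_inv_cancel₀ h0
      have e1 : ((algebraMap ℂ (H →L[ℂ] H)) ζ - R) * G = 1 := by
        rw [Algebra.algebraMap_eq_smul_one]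
        ext f
        simp only [ContinuousLinearMap.mul_apply, ContinuousLinearMap.smul_apply,
          ContinuousLinearMap.sub_apply, ContinuousLinearMap.add_apply,
          ContinuousLinearMap.one_apply, map_add, map_smul, hGdef]
        rw [hRR2 f]
        match_scalars <;> field_simp <;> ring
      have e2 : G * ((algebraMap ℂ (H →L[ℂ] H)) ζ - R) = 1 := by
        rw [Algebra.algebraMap_eq_smul_one]
        ext f
        simp only [ContinuousLinearMap.mul_apply, ContinuousLinearMap.smul_apply,
          ContinuousLinearMap.sub_apply, ContinuousLinearMap.add_apply,
          ContinuousLinearMap.one_apply, map_add, map_sub, map_smul, hGdef]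
        rw [hR2R f]
        match_scalars <;> field_simp <;> ring
      have hunit : IsUnit ((algebraMap ℂ (H →L[ℂ] H)) ζ - R) :=
        ⟨⟨_, G, e1, e2⟩, rfl⟩
      exact (spectrum.notMem_iff.mpr hunit) hζ
    · have hdist := hcon ν hin
      have habs : dist ν lam = ‖ζ‖⁻¹ := by
        rw [hν, Complex.dist_eq]
        simp [norm_inv]
      rw [habs] at hdist
      rw [← inv_inv ‖ζ‖, one_div]
      exact inv_anti₀ hr hdist.le
  have h1 : spectralRadius ℂ R = ‖R‖₊ := hRsa.spectralRadius_eq_nnnorm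
  have h2 : spectralRadius ℂ R ≤ ENNReal.ofReal (1 / r) := by
    unfold spectralRadius
    refine iSup₂_le fun ζ hζ => ?_
    calc (‖ζ‖₊ : ℝ≥0∞) = ENNReal.ofReal ‖ζ‖ := (ofReal_norm ζ).symm
      _ ≤ ENNReal.ofReal (1 / r) := ENNReal.ofReal_le_ofReal (hspec ζ hζ)
  have h3 : ‖R‖ ≤ 1 / r := by
    have h4 : (‖R‖₊ : ℝ≥0∞) ≤ ENNReal.ofReal (1 / r) := h1 ▸ h2
    rw [← enorm_eq_nnnorm, ← ofReal_norm] at h4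
    exact (ENNReal.ofReal_le_ofReal_iff (by positivity)).mp h4
  have h5 := hR.2 w
  have h6 : ‖(w : H)‖ ≤ ‖R‖ * ‖A w - lam • (w : H)‖ := by
    calc ‖(w : H)‖ = ‖R (A w - lam • (w : H))‖ := by rw [h5]
      _ ≤ ‖R‖ * ‖A w - lam • (w : H)‖ := R.le_opNorm _
  have hX0 : (0 : ℝ) ≤ ‖A w - lam • (w : H)‖ := norm_nonneg _
  have hstep : ‖R‖ * ‖A w - lam • (w : H)‖ ≤ (1 / r) * ‖A w - lam • (w : H)‖ :=
    mul_le_mul_of_nonneg_right h3 hX0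
  have hstep2 : (1 / r) * ‖A w - lam • (w : H)‖ < (1 / r) * (r * ‖(w : H)‖) :=
    mul_lt_mul_of_pos_left hsmall (by positivity)
  have heq : (1 / r) * (r * ‖(w : H)‖) = ‖(w : H)‖ := by field_simp
  linarith

lemma weyl {B : H →ₗ.[ℂ] H} (hB : IsSelfAdjoint B) {lam : ℂ} (hlam : lam.im = 0)
    (h : ¬ InResolventSet B lam) {ε : ℝ} (hε : 0 < ε) :
    ∃ u : B.domain, (u : H) ≠ 0 ∧ ‖B u - lam • (u : H)‖ ≤ ε * ‖(u : H)‖ := by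
  by_contra hcon
  push_neg at hcon
  have hlow : ∀ u : B.domain, ε * ‖(u : H)‖ ≤ ‖B u - lam • (u : H)‖ := by
    intro u
    rcases eq_or_ne ((u : H)) 0 with h0 | h0
    · have hu0 : u = 0 := Subtype.ext h0
      rw [hu0]
      simp
    · exact (hcon u h0).le
  have hconj : starRingEnd ℂ lam = lam := Complex.conj_eq_iff_im.mpr hlam
  exact h (inResolventSet_of_lower hB lam hε hlow (by rw [hconj]; exact hlow))


end AuxiliaryLemmas

/-- Under strong resolvent convergence, the spectrum of the limit cannot expand: every point
of `σ(B)` is the limit of a sequence of points `lam n ∈ σ(A n)`. -/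
theorem spectrum_subset_lim_of_strongResolventConv
    {H : Type*} [NormedAddCommGroup H] [InnerProductSpace ℂ H] [CompleteSpace H]
    [TopologicalSpace.SeparableSpace H]
    (A : ℕ → H →ₗ.[ℂ] H) (B : H →ₗ.[ℂ] H)
    (hA : ∀ n, IsSelfAdjoint (A n)) (hB : IsSelfAdjoint B)
    (hconv : StrongResolventConv A B) :
    ∀ lam : ℂ, ¬ InResolventSet B lam →
      ∃ seq : ℕ → ℂ, (∀ n, ¬ InResolventSet (A n) (seq n)) ∧
        Tendsto seq atTop (𝓝 lam) := by
  intro lam hlam_not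
  have him : lam.im = 0 := by
    by_contra h
    exact hlam_not (inResolventSet_nonreal hB h)
  have hI : (Complex.I).im ≠ 0 := by simp
  choose Rn hRn using fun n => exists_isResolvent_of_in (inResolventSet_nonreal (hA n) hI)
  obtain ⟨S, hS⟩ := exists_isResolvent_of_in (inResolventSet_nonreal hB hI)
  have hst : ∀ f : H, Tendsto (fun n => Rn n f) atTop (𝓝 (S f)) :=
    hconv Complex.I hI Rn S hRn hS
  set T : ℕ → Set ℂ := fun n => {μ | ¬ InResolventSet (A n) μ} with hT
  -- each T n is nonempty
  have hne : ∀ n, (T n).Nonempty := by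
    intro n
    obtain ⟨u, hu0, _⟩ := weyl hB him hlam_not one_pos
    set f := (B u : H) - Complex.I • (u : H) with hf
    have hSf : S f = (u : H) := hS.2 u
    have hf0 : f ≠ 0 := by
      intro h0
      rw [h0, map_zero] at hSf
      exact hu0 hSf.symm
    obtain ⟨hm, _⟩ := (hRn n).1 f
    set w : (A n).domain := ⟨Rn n f, hm⟩ with hwdef
    have hw0 : (w : H) ≠ 0 := fun hh => hf0 (resolvent_inj (hRn n) hh)
    have hwpos : 0 < ‖(w : H)‖ := norm_pos_iff.mpr hw0
    set r := ‖A n w - lam • (w : H)‖ / ‖(w : H)‖ + 1 with hrdef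
    have hr : 0 < r := by positivity
    have hsmall : ‖A n w - lam • (w : H)‖ < r * ‖(w : H)‖ := by
      rw [hrdef, add_mul, div_mul_cancel₀ _ (ne_of_gt hwpos), one_mul]
      linarith
    obtain ⟨μ, hμ, _⟩ := near_spectrum (hA n) him hr w hw0 hsmall
    exact ⟨μ, hμ⟩
  -- eventually there are spectral points near lam
  have hkey : ∀ ε : ℝ, 0 < ε → ∀ᶠ n in atTop, ∃ μ ∈ T n, dist μ lam ≤ ε := by
    intro ε hε
    set c : ℝ := 1 + ‖lam - Complex.I‖ with hc
    have hcpos : 0 < c := by positivity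
    set ε' : ℝ := min (1/2) (ε / (4 * c)) with hε'def
    have hε' : 0 < ε' := lt_min (by norm_num) (by positivity)
    obtain ⟨u, hu0, huw⟩ := weyl hB him hlam_not hε'
    set f := (B u : H) - Complex.I • (u : H) with hf
    have hSf : S f = (u : H) := hS.2 u
    have hupos : 0 < ‖(u : H)‖ := norm_pos_iff.mpr hu0
    have h2 : ∀ᶠ n in atTop, dist (Rn n f) ((u : H)) < ε' * ‖(u : H)‖ := by
      have h3 := hst f
      rw [hSf] at h3
      exact Metric.tendsto_nhds.mp h3 (ε' * ‖(u : H)‖) (by positivity)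
    filter_upwards [h2] with n hn
    obtain ⟨hm, hmeq⟩ := (hRn n).1 f
    set w : (A n).domain := ⟨Rn n f, hm⟩ with hwdef
    have hwu : ‖(w : H) - (u : H)‖ < ε' * ‖(u : H)‖ := by
      rw [← dist_eq_norm]
      exact hn
    have hwlow : (1/2) * ‖(u : H)‖ ≤ ‖(w : H)‖ := by
      have h4 : ‖(u : H)‖ - ‖(w : H)‖ ≤ ‖(w : H) - (u : H)‖ := by
        rw [norm_sub_rev]
        exact norm_sub_norm_le _ _
      have h5 : ε' ≤ 1/2 := min_le_left _ _
      nlinarith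
    have hw0 : (w : H) ≠ 0 := by
      intro hh
      rw [hh, norm_zero] at hwlow
      nlinarith
    have hwpos : 0 < ‖(w : H)‖ := norm_pos_iff.mpr hw0
    -- the key decomposition
    have hdec : (A n w : H) - lam • (w : H) =
        ((B u : H) - lam • (u : H)) + (lam - Complex.I) • ((u : H) - (w : H)) := by
      have h6 : (A n w : H) - Complex.I • (w : H) = f := hmeq
      have h7 : (A n w : H) = f + Complex.I • (w : H) := by
        rw [← h6]; abel
      rw [h7, hf]
      module
    have hnorm : ‖(A n w : H) - lam • (w : H)‖ < ε * ‖(w : H)‖ := by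
      rw [hdec]
      have h8 : ‖((B u : H) - lam • (u : H)) + (lam - Complex.I) • ((u : H) - (w : H))‖
          ≤ ε' * ‖(u : H)‖ + ‖lam - Complex.I‖ * (ε' * ‖(u : H)‖) := by
        calc ‖((B u : H) - lam • (u : H)) + (lam - Complex.I) • ((u : H) - (w : H))‖
            ≤ ‖(B u : H) - lam • (u : H)‖ + ‖(lam - Complex.I) • ((u : H) - (w : H))‖ :=
              norm_add_le _ _
          _ ≤ ε' * ‖(u : H)‖ + ‖lam - Complex.I‖ * (ε' * ‖(u : H)‖) := by
              apply add_le_add huw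
              rw [norm_smul]
              apply mul_le_mul_of_nonneg_left _ (norm_nonneg _)
              rw [norm_sub_rev]
              exact hwu.le
      have h9 : ε' * ‖(u : H)‖ + ‖lam - Complex.I‖ * (ε' * ‖(u : H)‖)
          = ε' * c * ‖(u : H)‖ := by rw [hc]; ring
      have h10 : ε' ≤ ε / (4 * c) := min_le_right _ _
      have h11 : ε' * c * ‖(u : H)‖ ≤ ε' * c * (2 * ‖(w : H)‖) := by
        apply mul_le_mul_of_nonneg_left _ (by positivity)
        linarith
      have h12 : ε' * c * (2 * ‖(w : H)‖) ≤ (ε / (4 * c)) * c * (2 * ‖(w : H)‖) := by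
        apply mul_le_mul_of_nonneg_right _ (by positivity)
        exact mul_le_mul_of_nonneg_right h10 hcpos.le
      have h13 : (ε / (4 * c)) * c * (2 * ‖(w : H)‖) = (ε / 2) * ‖(w : H)‖ := by
        field_simp
        ring
      have h14 : (ε / 2) * ‖(w : H)‖ < ε * ‖(w : H)‖ := by nlinarith
      calc ‖((B u : H) - lam • (u : H)) + (lam - Complex.I) • ((u : H) - (w : H))‖
          ≤ ε' * ‖(u : H)‖ + ‖lam - Complex.I‖ * (ε' * ‖(u : H)‖) := h8
        _ = ε' * c * ‖(u : H)‖ := h9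
        _ ≤ ε' * c * (2 * ‖(w : H)‖) := h11
        _ ≤ (ε / (4 * c)) * c * (2 * ‖(w : H)‖) := h12
        _ = (ε / 2) * ‖(w : H)‖ := h13
        _ < ε * ‖(w : H)‖ := h14
    obtain ⟨μ, hμ1, hμ2⟩ := near_spectrum (hA n) him hε w hw0 hnorm
    exact ⟨μ, hμ1, hμ2⟩
  -- select the sequence
  have hsel : ∀ n, ∃ μ, μ ∈ T n ∧ dist lam μ < Metric.infDist lam (T n) + 1/(n+1) := by
    intro n
    have h1 : Metric.infDist lam (T n) < Metric.infDist lam (T n) + 1/(n+1) := by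
      have : (0:ℝ) < 1/(n+1) := by positivity
      linarith
    obtain ⟨μ, hμ1, hμ2⟩ := (Metric.infDist_lt_iff (hne n)).mp h1
    exact ⟨μ, hμ1, hμ2⟩
  choose seq hseq1 hseq2 using hsel
  refine ⟨seq, fun n => hseq1 n, ?_⟩
  rw [Metric.tendsto_atTop]
  intro ε hε
  have h3 : ∀ᶠ n in atTop, Metric.infDist lam (T n) ≤ ε/3 := by
    filter_upwards [hkey (ε/3) (by positivity)] with n hn
    obtain ⟨μ, hμ1, hμ2⟩ := hn
    calc Metric.infDist lam (T n) ≤ dist lam μ := Metric.infDist_le_dist_of_mem hμ1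
      _ ≤ ε/3 := by rw [dist_comm]; exact hμ2
  have h4 : ∀ᶠ n : ℕ in atTop, (1 : ℝ)/(n+1) < ε/3 :=
    tendsto_one_div_add_atTop_nhds_zero_nat.eventually_lt_const (by positivity)
  rw [eventually_atTop] at h3 h4
  obtain ⟨N1, hN1⟩ := h3
  obtain ⟨N2, hN2⟩ := h4
  refine ⟨max N1 N2, fun n hn => ?_⟩
  have ha := hN1 n (le_trans (le_max_left _ _) hn)
  have hb := hN2 n (le_trans (le_max_right _ _) hn)
  have hc := hseq2 n
  rw [dist_comm]
  linarith
end
end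

section
/- Let (A_n)_{n∈ℕ} and A be self-adjoint operators on a complex separable Hilbert space H. Then A_n converges to A in the strong resolvent sense if and only if A is the strong graph limit of (A_n), i.e. the set of pairs (φ, ψ) ∈ H × H for which there exist φ_n ∈ Dom(A_n) with φ_n → φ and A_n φ_n → ψ strongly in H equals the graph {(u, Au) : u ∈ Dom(A)} of A. -/
open Filter Topology
open scoped ComplexInnerProductSpace

noncomputable section

variable {H : Type*} [NormedAddCommGroup H] [InnerProductSpace ℂ H] [CompleteSpace H]

namespace SRCaux

set_option linter.unusedSectionVars false

lemma apply_congr {B : H →ₗ.[ℂ] H} {x y : H} (hxy : x = y) (hx : x ∈ B.domain) :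
    B ⟨x, hx⟩ = B ⟨y, hxy ▸ hx⟩ := by cases hxy; rfl

lemma pmap_congr {f g : H →ₗ.[ℂ] H} (h : f = g) {x : H} (hx : x ∈ f.domain) :
    f ⟨x, hx⟩ = g ⟨x, h ▸ hx⟩ := by subst h; rfl

lemma isFormalAdjoint_self {A : H →ₗ.[ℂ] H} (hA : IsSelfAdjoint A) :
    A.IsFormalAdjoint A := by
  have h := LinearPMap.adjoint_isFormalAdjoint (T := A) hA.dense_domain
  have hst : A.adjoint = A := hA
  rwa [hst] at h

lemma inner_self_real {A : H →ₗ.[ℂ] H} (hA : IsSelfAdjoint A) (u : A.domain) :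
    (⟪(u : H), A u⟫).im = 0 := by
  have h := isFormalAdjoint_self hA u u
  have h2 : (starRingEnd ℂ) ⟪(u : H), A u⟫ = ⟪(u : H), A u⟫ := by
    rw [inner_conj_symm]; exact h
  exact Complex.conj_eq_iff_im.mp h2

lemma symm_bound {A : H →ₗ.[ℂ] H} (hA : IsSelfAdjoint A) (lam : ℂ) (u : A.domain) :
    |lam.im| * ‖(u : H)‖ ≤ ‖A u - lam • (u : H)‖ := by
  set w := A u - lam • (u : H) with hw
  have h1 : (⟪(u : H), w⟫).im = - (lam.im * ‖(u : H)‖ ^ 2) := by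
    have hre : (⟪(u : H), (u : H)⟫).re = ‖(u : H)‖ ^ 2 :=
      inner_self_eq_norm_sq (𝕜 := ℂ) (u : H)
    have him : (⟪(u : H), (u : H)⟫).im = 0 := inner_self_im (𝕜 := ℂ) (u : H)
    rw [hw, inner_sub_right, inner_smul_right]
    simp only [Complex.sub_im, Complex.mul_im, inner_self_real hA u, hre, him]
    ring
  have h2 : |(⟪(u : H), w⟫).im| ≤ ‖(u : H)‖ * ‖w‖ := by
    calc |(⟪(u : H), w⟫).im| ≤ ‖⟪(u : H), w⟫‖ := Complex.abs_im_le_norm _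
    _ = ‖⟪(u : H), w⟫‖ := rfl
    _ ≤ ‖(u : H)‖ * ‖w‖ := norm_inner_le_norm _ _
  rw [h1, abs_neg, abs_mul, abs_of_nonneg (sq_nonneg ‖(u : H)‖)] at h2
  rcases eq_or_lt_of_le (norm_nonneg (u : H)) with h0 | h0
  · rw [← h0, mul_zero]; exact norm_nonneg _
  · nlinarith [abs_nonneg lam.im]

lemma resolvent_bound {A : H →ₗ.[ℂ] H} (hA : IsSelfAdjoint A) {lam : ℂ} {R : H →L[ℂ] H}
    (hR : IsResolvent A lam R) (f : H) : |lam.im| * ‖R f‖ ≤ ‖f‖ := by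
  obtain ⟨h, hh⟩ := hR.1 f
  have := symm_bound hA lam ⟨R f, h⟩
  rw [hh] at this
  exact this

lemma mem_of_forall_inner {A : H →ₗ.[ℂ] H} (hA : IsSelfAdjoint A) {u w : H}
    (hw : ∀ x : A.domain, ⟪w, (x : H)⟫ = ⟪u, A x⟫) :
    ∃ h : u ∈ A.domain, A ⟨u, h⟩ = w := by
  have hd := hA.dense_domain
  have hst : A.adjoint = A := hA
  have h1 : u ∈ A.adjoint.domain := LinearPMap.mem_adjoint_domain_of_exists u ⟨w, hw⟩
  have h2 : A.adjoint ⟨u, h1⟩ = w := LinearPMap.adjoint_apply_eq hd _ hw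
  exact ⟨hst ▸ h1, (pmap_congr hst h1).symm.trans h2⟩

lemma exists_resolvent {A : H →ₗ.[ℂ] H} (hA : IsSelfAdjoint A) :
    ∃ R : H →L[ℂ] H, IsResolvent A Complex.I R := by
  classical
  set L : A.domain →ₗ[ℂ] H := A.toFun - Complex.I • A.domain.subtype with hLdef
  have hL : ∀ u : A.domain, L u = A u - Complex.I • (u : H) := fun u => rfl
  have hb : ∀ u : A.domain, ‖(u : H)‖ ≤ ‖L u‖ := by
    intro u
    have := symm_bound hA Complex.I u
    simpa [hL, Complex.I_im] using this
  -- range is closed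
  have hclosed : IsClosed ((LinearMap.range L : Submodule ℂ H) : Set H) := by
    rw [← isSeqClosed_iff_isClosed]
    intro x v hx hv
    choose u hu using hx
    have hcauchy : CauchySeq (fun n => ((u n : H))) := by
      rw [Metric.cauchySeq_iff]
      intro ε hε
      obtain ⟨N, hN⟩ := Metric.cauchySeq_iff.mp hv.cauchySeq ε hε
      refine ⟨N, fun m hm n hn => ?_⟩
      have hle : dist ((u m : H)) ((u n : H)) ≤ dist (x m) (x n) := by
        rw [dist_eq_norm, dist_eq_norm]
        calc ‖(u m : H) - (u n : H)‖ = ‖((u m - u n : A.domain) : H)‖ := by push_cast; ring_nf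
        _ ≤ ‖L (u m - u n)‖ := hb _
        _ = ‖x m - x n‖ := by rw [map_sub, hu m, hu n]
      exact lt_of_le_of_lt hle (hN m hm n hn)
    obtain ⟨p, hp⟩ := cauchySeq_tendsto_of_complete hcauchy
    have hAu : Tendsto (fun n => A (u n)) atTop (𝓝 (v + Complex.I • p)) := by
      have : ∀ n, A (u n) = x n + Complex.I • ((u n : H)) := by
        intro n
        have := hu n
        rw [hL] at this
        rw [← this]; abel
      simp only [this]
      exact hv.add (hp.const_smul _)
    have hmem := mem_of_forall_inner hA (u := p) (w := v + Complex.I • p) ?_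
    · obtain ⟨h, hval⟩ := hmem
      refine ⟨⟨p, h⟩, ?_⟩
      rw [hL]
      show A ⟨p, h⟩ - Complex.I • p = v
      rw [hval]; abel
    · intro y
      have h1 : Tendsto (fun n => ⟪A (u n), (y : H)⟫) atTop (𝓝 ⟪v + Complex.I • p, (y : H)⟫) :=
        (Continuous.inner continuous_id continuous_const).continuousAt.tendsto.comp hAu |>.congr
          (fun n => rfl)
      have h2 : Tendsto (fun n => ⟪A (u n), (y : H)⟫) atTop (𝓝 ⟪p, A y⟫) := by
        have : ∀ n, ⟪A (u n), (y : H)⟫ = ⟪((u n : H)), A y⟫ := fun n =>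
          isFormalAdjoint_self hA (u n) y
        simp only [this]
        exact (Continuous.inner continuous_id continuous_const).continuousAt.tendsto.comp hp
      exact tendsto_nhds_unique h1 h2
  -- range is dense
  have horth : (LinearMap.range L)ᗮ = ⊥ := by
    rw [Submodule.eq_bot_iff]
    intro f hf
    rw [Submodule.mem_orthogonal'] at hf
    have hf' : ∀ u : A.domain, ⟪f, A u - Complex.I • (u : H)⟫ = 0 := by
      intro u
      exact hf _ ⟨u, (hL u).symm ▸ rfl⟩
    have hmem := mem_of_forall_inner hA (u := f) (w := (-Complex.I) • f) ?_
    · obtain ⟨h, hval⟩ := hmem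
      have him := inner_self_real hA ⟨f, h⟩
      rw [hval] at him
      rw [inner_smul_right] at him
      have hre : (⟪f, f⟫).re = ‖f‖ ^ 2 := inner_self_eq_norm_sq (𝕜 := ℂ) f
      have him2 : (⟪f, f⟫).im = 0 := inner_self_im (𝕜 := ℂ) f
      simp only [Complex.mul_im, Complex.neg_im, Complex.neg_re, Complex.I_im, Complex.I_re,
        hre, him2] at him
      have : ‖f‖ ^ 2 = 0 := by linarith [him]
      simpa using pow_eq_zero_iff (n := 2) (by norm_num) |>.mp this
    · intro x
      have h0 := hf' x
      rw [inner_sub_right, inner_smul_right, sub_eq_zero] at h0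
      rw [inner_smul_left, h0, map_neg, Complex.conj_I]
      ring
  have hrange : LinearMap.range L = ⊤ := by
    have h1 : (LinearMap.range L).topologicalClosure = ⊤ :=
      Submodule.topologicalClosure_eq_top_iff.mpr horth
    rw [← h1, hclosed.submodule_topologicalClosure_eq]
  have hinj : Function.Injective L := by
    intro a b hab
    have h1 : ‖((a - b : A.domain) : H)‖ ≤ ‖L (a - b)‖ := hb _
    rw [map_sub, hab, sub_self, norm_zero] at h1
    have h2 : ((a - b : A.domain) : H) = 0 := norm_le_zero_iff.mp h1
    have : (a - b : A.domain) = 0 := by exact_mod_cast h2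
    exact sub_eq_zero.mp this
  have hsurj : Function.Surjective L := by
    intro v
    have : v ∈ LinearMap.range L := hrange ▸ Submodule.mem_top
    exact this
  set e := LinearEquiv.ofBijective L ⟨hinj, hsurj⟩ with he
  have heL : ∀ u, e u = L u := fun u => rfl
  set Rlin : H →ₗ[ℂ] H := (A.domain.subtype).comp (e.symm : H →ₗ[ℂ] A.domain) with hRlin
  have hRlin_apply : ∀ f, Rlin f = ((e.symm f : A.domain) : H) := fun f => rfl
  have hRbound : ∀ f, ‖Rlin f‖ ≤ 1 * ‖f‖ := by
    intro f
    rw [one_mul, hRlin_apply]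
    have h1 := hb (e.symm f)
    have h2 : L (e.symm f) = f := e.apply_symm_apply f
    rwa [h2] at h1
  refine ⟨Rlin.mkContinuous 1 hRbound, ?_, ?_⟩
  · intro f
    have hmem : Rlin.mkContinuous 1 hRbound f ∈ A.domain := by
      rw [LinearMap.mkContinuous_apply, hRlin_apply]
      exact (e.symm f).2
    refine ⟨hmem, ?_⟩
    have h2 : L (e.symm f) = f := e.apply_symm_apply f
    rw [hL] at h2
    have h3 : (⟨Rlin.mkContinuous 1 hRbound f, hmem⟩ : A.domain) = e.symm f :=
      Subtype.ext rfl
    have h4 : (Rlin.mkContinuous 1 hRbound f : H) = ((e.symm f : A.domain) : H) := rfl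
    rw [h3, h4]
    exact h2
  · intro u
    have h1 : A u - Complex.I • (u : H) = L u := (hL u).symm
    rw [h1, LinearMap.mkContinuous_apply, hRlin_apply]
    rw [show L u = e u from rfl, e.symm_apply_apply]

end SRCaux

/-- `A n` converges to `B` in the strong resolvent sense iff `B` is the strong graph limit
of the `A n`: the set of pairs `(φ, ψ)` that arise as limits `φ n → φ`, `A n (φ n) → ψ`
with `φ n ∈ Dom (A n)` equals the graph of `B`. -/
theorem strongResolventConv_iff_strongGraphLimit
    {H : Type*} [NormedAddCommGroup H] [InnerProductSpace ℂ H] [CompleteSpace H]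
    [TopologicalSpace.SeparableSpace H]
    (A : ℕ → H →ₗ.[ℂ] H) (B : H →ₗ.[ℂ] H)
    (hA : ∀ n, IsSelfAdjoint (A n)) (hB : IsSelfAdjoint B) :
    StrongResolventConv A B ↔
      {p : H × H | ∃ phi : (n : ℕ) → (A n).domain,
          Tendsto (fun n => ((phi n : H))) atTop (𝓝 p.1) ∧
          Tendsto (fun n => (A n) (phi n)) atTop (𝓝 p.2)} =
        {p : H × H | ∃ h : p.1 ∈ B.domain, B ⟨p.1, h⟩ = p.2} := by
  classical
  constructor
  · intro hsrc
    choose R hR using fun n => SRCaux.exists_resolvent (hA n)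
    obtain ⟨S, hS⟩ := SRCaux.exists_resolvent hB
    have hIim : (Complex.I).im ≠ 0 := by simp
    have hconv := hsrc Complex.I hIim R S hR hS
    have hRb : ∀ n (w : H), ‖R n w‖ ≤ ‖w‖ := by
      intro n w
      have := SRCaux.resolvent_bound (hA n) (hR n) w
      simpa [Complex.I_im] using this
    ext p
    obtain ⟨φ, ψ⟩ := p
    simp only [Set.mem_setOf_eq]
    constructor
    · rintro ⟨phi, hφ, hψ⟩
      set g := ψ - Complex.I • φ with hg
      set f : ℕ → H := fun n => A n (phi n) - Complex.I • ((phi n : H)) with hf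
      have hfn : Tendsto f atTop (𝓝 g) := hψ.sub (hφ.const_smul _)
      have hkey : Tendsto (fun n => ((phi n : H))) atTop (𝓝 (S g)) := by
        rw [tendsto_iff_norm_sub_tendsto_zero]
        have hbound : ∀ n, ‖((phi n : H)) - S g‖ ≤ ‖f n - g‖ + ‖R n g - S g‖ := by
          intro n
          have h1 : R n (f n) = ((phi n : H)) := (hR n).2 (phi n)
          have h2 : ((phi n : H)) - S g = R n (f n - g) + (R n g - S g) := by
            rw [map_sub (R n) (f n) g, h1]; abel
          rw [h2]
          exact (norm_add_le _ _).trans (by gcongr; exact hRb n _)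
        refine squeeze_zero (fun n => norm_nonneg _) hbound ?_
        have t1 : Tendsto (fun n => ‖f n - g‖) atTop (𝓝 0) :=
          tendsto_iff_norm_sub_tendsto_zero.mp hfn
        have t2 : Tendsto (fun n => ‖R n g - S g‖) atTop (𝓝 0) :=
          tendsto_iff_norm_sub_tendsto_zero.mp (hconv g)
        simpa using t1.add t2
      have hφS : φ = S g := tendsto_nhds_unique hφ hkey
      obtain ⟨hmem, hval⟩ := hS.1 g
      have hmem' : φ ∈ B.domain := hφS ▸ hmem
      refine ⟨hmem', ?_⟩
      have h3 : B ⟨φ, hmem'⟩ = B ⟨S g, hmem⟩ := by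
        rw [SRCaux.apply_congr hφS hmem']
      rw [h3]
      have h4 : B ⟨S g, hmem⟩ = g + Complex.I • S g := sub_eq_iff_eq_add.mp hval
      rw [h4, ← hφS, hg]
      abel
    · rintro ⟨hmem, hval⟩
      set g := ψ - Complex.I • φ with hg
      have hSg : S g = φ := by
        have h1 : g = B ⟨φ, hmem⟩ - Complex.I • φ := by rw [hval]
        have := hS.2 ⟨φ, hmem⟩
        rw [← h1] at this
        exact this
      refine ⟨fun n => ⟨R n g, ((hR n).1 g).choose⟩, ?_, ?_⟩
      · simpa [hSg] using hconv g
      · have hAformula : ∀ n, A n ⟨R n g, ((hR n).1 g).choose⟩ = g + Complex.I • R n g :=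
          fun n => sub_eq_iff_eq_add.mp ((hR n).1 g).choose_spec
        simp only [hAformula]
        have : Tendsto (fun n => g + Complex.I • R n g) atTop (𝓝 (g + Complex.I • S g)) :=
          tendsto_const_nhds.add ((hconv g).const_smul _)
        rw [hSg] at this
        have hid : g + Complex.I • φ = ψ := by rw [hg]; abel
        rwa [hid] at this
  · intro heq lam hlam Rg S hR hS u
    obtain ⟨hmem, hval⟩ := hS.1 u
    have hpair : ((S u, B ⟨S u, hmem⟩) : H × H) ∈
        {p : H × H | ∃ h : p.1 ∈ B.domain, B ⟨p.1, h⟩ = p.2} := ⟨hmem, rfl⟩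
    rw [← heq] at hpair
    obtain ⟨phi, hφ, hψ⟩ := hpair
    set f : ℕ → H := fun n => A n (phi n) - lam • ((phi n : H)) with hf
    have hfu : Tendsto f atTop (𝓝 u) := by
      have : Tendsto f atTop (𝓝 (B ⟨S u, hmem⟩ - lam • S u)) := hψ.sub (hφ.const_smul _)
      rwa [hval] at this
    have hc : (0:ℝ) < |lam.im| := abs_pos.mpr hlam
    have hRb : ∀ n (w : H), ‖Rg n w‖ ≤ |lam.im|⁻¹ * ‖w‖ := by
      intro n w
      have := SRCaux.resolvent_bound (hA n) (hR n) w
      have h2 : ‖Rg n w‖ = |lam.im|⁻¹ * (|lam.im| * ‖Rg n w‖) := by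
        field_simp
      rw [h2]
      gcongr
    rw [tendsto_iff_norm_sub_tendsto_zero]
    have hbound : ∀ n, ‖Rg n u - S u‖ ≤ |lam.im|⁻¹ * ‖u - f n‖ + ‖((phi n : H)) - S u‖ := by
      intro n
      have h1 : Rg n (f n) = ((phi n : H)) := (hR n).2 (phi n)
      have h2 : Rg n u - S u = Rg n (u - f n) + (((phi n : H)) - S u) := by
        rw [map_sub (Rg n) u (f n), h1]; abel
      rw [h2]
      exact (norm_add_le _ _).trans (by gcongr; exact hRb n _)
    refine squeeze_zero (fun n => norm_nonneg _) hbound ?_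
    have t1 : Tendsto (fun n => ‖u - f n‖) atTop (𝓝 0) := by
      have := tendsto_iff_norm_sub_tendsto_zero.mp hfu
      simpa [norm_sub_rev] using this
    have t2 : Tendsto (fun n => ‖((phi n : H)) - S u‖) atTop (𝓝 0) :=
      tendsto_iff_norm_sub_tendsto_zero.mp hφ
    simpa using (t1.const_mul |lam.im|⁻¹).add t2
end
end

section
/- Let c > 0 and let (A_n)_{n∈ℕ} and A_∞ be self-adjoint operators on a complex separable Hilbert space H such that ⟨A_n u, u⟩ ≥ c‖u‖² for every u ∈ Dom(A_n) and every n ∈ ℕ ∪ {∞} (in particular each A_n is bijective from Dom(A_n) onto H with bounded inverse A_n^{-1}). Then A_n converges to A_∞ in the strong resolvent sense if and only if A_n strongly G-converges to A_∞, i.e. for every f ∈ H, A_n^{-1} f → A_∞^{-1} f strongly in H as n → +∞. -/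
open Filter Topology
open scoped ComplexInnerProductSpace

noncomputable section

variable {H : Type*} [NormedAddCommGroup H] [InnerProductSpace ℂ H] [CompleteSpace H]

section Helpers

variable {H : Type*} [NormedAddCommGroup H] [InnerProductSpace ℂ H] [CompleteSpace H]

lemma symm_of_sa (A : H →ₗ.[ℂ] H) (hA : IsSelfAdjoint A) (x y : A.domain) :
    ⟪A x, (y : H)⟫ = ⟪(x : H), A y⟫ := by
  have hA' : LinearPMap.adjoint A = A := LinearPMap.isSelfAdjoint_def.mp hA
  have h := A.adjoint_isFormalAdjoint hA.dense_domain
  rw [hA'] at h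
  exact h x y

lemma resolvent_diff_identity {A B : H →ₗ.[ℂ] H} {μ ν : ℂ}
    {Rμ Rν Sμ Sν : H →L[ℂ] H}
    (hRμ : IsResolvent A μ Rμ) (hRν : IsResolvent A ν Rν)
    (hSμ : IsResolvent B μ Sμ) (hSν : IsResolvent B ν Sν) (f g : H)
    (hgdef : g = f + (μ - ν) • Sμ f) :
    Rμ f - Sμ f = (Rν g - Sν g) + (μ - ν) • Rμ (Rν g - Sν g) := by
  obtain ⟨hu, huf⟩ := hSμ.1 f
  have hBu : B ⟨Sμ f, hu⟩ = f + μ • Sμ f := by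
    rw [sub_eq_iff_eq_add] at huf; exact huf
  have h1 : Sν g = Sμ f := by
    have h : Sν (B ⟨Sμ f, hu⟩ - ν • (Sμ f)) = Sμ f := hSν.2 ⟨Sμ f, hu⟩
    have hg : B ⟨Sμ f, hu⟩ - ν • (Sμ f) = g := by
      rw [hBu, hgdef, sub_smul]; abel
    rwa [hg] at h
  obtain ⟨hv, hvg⟩ := hRν.1 g
  have hAv : A ⟨Rν g, hv⟩ = g + ν • Rν g := by
    rw [sub_eq_iff_eq_add] at hvg; exact hvg
  have h2 : Rν g + (μ - ν) • Rμ (Rν g) = Rμ g := by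
    have h : Rμ (A ⟨Rν g, hv⟩ - μ • (Rν g)) = Rν g := hRμ.2 ⟨Rν g, hv⟩
    have hx : A ⟨Rν g, hv⟩ - μ • (Rν g) = g + (ν - μ) • Rν g := by
      rw [hAv, sub_smul]; abel
    rw [hx, map_add, map_smul] at h
    calc Rν g + (μ - ν) • Rμ (Rν g)
        = (Rμ g + (ν - μ) • Rμ (Rν g)) + (μ - ν) • Rμ (Rν g) := by rw [h]
      _ = Rμ g := by rw [sub_smul, sub_smul]; abel
  have h3 : Rμ f = Rμ g - (μ - ν) • Rμ (Sμ f) := by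
    have hf : f = g - (μ - ν) • Sμ f := by rw [hgdef]; abel
    conv_lhs => rw [hf]
    rw [map_sub, map_smul]
  rw [h1, map_sub, h3, ← h2, smul_sub]; abel

lemma resolvent_norm_bound {A : H →ₗ.[ℂ] H} (hA : IsSelfAdjoint A) {lam : ℂ}
    (hlam : lam.im ≠ 0) {R : H →L[ℂ] H} (hR : IsResolvent A lam R) (f : H) :
    ‖R f‖ ≤ ‖f‖ / |lam.im| := by
  obtain ⟨hu, huf⟩ := hR.1 f
  set u := R f with hu'
  have hsym : (⟪A ⟨u, hu⟩, (u : H)⟫).im = 0 := by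
    have h := symm_of_sa A hA ⟨u, hu⟩ ⟨u, hu⟩
    have h2 : (starRingEnd ℂ) ⟪A ⟨u, hu⟩, (u : H)⟫ = ⟪A ⟨u, hu⟩, (u : H)⟫ := by
      rw [inner_conj_symm]; exact h.symm
    exact Complex.conj_eq_iff_im.mp h2
  have him : (⟪f, u⟫).im = lam.im * ‖u‖ ^ 2 := by
    have hf : f = A ⟨u, hu⟩ - lam • u := huf.symm
    rw [hf, inner_sub_left, inner_smul_left, inner_self_eq_norm_sq_to_K (𝕜 := ℂ)]
    simp [Complex.sub_im, Complex.mul_im, hsym, ← Complex.ofReal_pow]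
  have h4 : |lam.im| * (‖u‖ * ‖u‖) ≤ ‖f‖ * ‖u‖ := by
    calc |lam.im| * (‖u‖ * ‖u‖) = |(⟪f, u⟫).im| := by
          rw [him, abs_mul, abs_of_nonneg (by positivity : (0:ℝ) ≤ ‖u‖ ^ 2)]
          ring
      _ ≤ ‖⟪f, u⟫‖ := by
          exact Complex.abs_im_le_norm _
      _ ≤ ‖f‖ * ‖u‖ := norm_inner_le_norm f u
  rcases eq_or_ne ‖u‖ 0 with h0 | h0
  · rw [h0]; positivity
  · have hupos : 0 < ‖u‖ := lt_of_le_of_ne (norm_nonneg u) (Ne.symm h0)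
    have himpos : 0 < |lam.im| := abs_pos.mpr hlam
    rw [le_div_iff₀ himpos]
    have := (mul_le_mul_iff_of_pos_right hupos).mp
      (by linarith [h4] : |lam.im| * ‖u‖ * ‖u‖ ≤ ‖f‖ * ‖u‖)
    linarith

open scoped ComplexOrder in
lemma inv_norm_bound {A : H →ₗ.[ℂ] H} {c : ℝ} (hc : 0 < c)
    (hco : ∀ u : A.domain, ((c * ‖(u : H)‖ ^ 2 : ℝ) : ℂ) ≤ ⟪A u, (u : H)⟫)
    {R : H →L[ℂ] H} (hR : IsResolvent A 0 R) (f : H) : ‖R f‖ ≤ ‖f‖ / c := by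
  obtain ⟨hu, huf⟩ := hR.1 f
  set u := R f with hudef
  have hAu : A ⟨u, hu⟩ = f := by simpa using huf
  have h := hco ⟨u, hu⟩
  rw [Complex.le_def] at h
  have hre : c * ‖u‖ ^ 2 ≤ (⟪f, u⟫).re := by
    have h1 := h.1
    rwa [Complex.ofReal_re, hAu] at h1
  have h4 : c * (‖u‖ * ‖u‖) ≤ ‖f‖ * ‖u‖ := by
    calc c * (‖u‖ * ‖u‖) = c * ‖u‖ ^ 2 := by ring
      _ ≤ (⟪f, u⟫).re := hre
      _ ≤ |(⟪f, u⟫).re| := le_abs_self _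
      _ ≤ ‖⟪f, u⟫‖ := by exact Complex.abs_re_le_norm _
      _ ≤ ‖f‖ * ‖u‖ := norm_inner_le_norm f u
  rcases eq_or_ne ‖u‖ 0 with h0 | h0
  · rw [h0]; positivity
  · have hupos : 0 < ‖u‖ := lt_of_le_of_ne (norm_nonneg u) (Ne.symm h0)
    rw [le_div_iff₀ hc]
    have := (mul_le_mul_iff_of_pos_right hupos).mp
      (by linarith [h4] : c * ‖u‖ * ‖u‖ ≤ ‖f‖ * ‖u‖)
    linarith

lemma inv_isSelfAdjoint {A : H →ₗ.[ℂ] H} (hA : IsSelfAdjoint A)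
    {R : H →L[ℂ] H} (hR : IsResolvent A 0 R) : IsSelfAdjoint R := by
  rw [ContinuousLinearMap.isSelfAdjoint_iff_isSymmetric]
  intro f g
  obtain ⟨hu, hus⟩ := hR.1 f
  obtain ⟨hv, hvs⟩ := hR.1 g
  have hf : A ⟨R f, hu⟩ = f := by simpa using hus
  have hg : A ⟨R g, hv⟩ = g := by simpa using hvs
  show ⟪R f, g⟫ = ⟪f, R g⟫
  calc ⟪R f, g⟫ = ⟪((⟨R f, hu⟩ : A.domain) : H), A ⟨R g, hv⟩⟫ := by rw [hg]
    _ = ⟪A ⟨R f, hu⟩, ((⟨R g, hv⟩ : A.domain) : H)⟫ := (symm_of_sa A hA _ _).symm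
    _ = ⟪f, R g⟫ := by rw [hf]

lemma exists_resolvent_I {A : H →ₗ.[ℂ] H} (hA : IsSelfAdjoint A) {T : H →L[ℂ] H}
    (hT : IsResolvent A 0 T) : ∃ R : H →L[ℂ] H, IsResolvent A Complex.I R := by
  have hTsa : IsSelfAdjoint T := inv_isSelfAdjoint hA hT
  have hunit : IsUnit (1 - Complex.I • T) := by
    have h1 : (-Complex.I) ∉ spectrum ℂ T := by
      intro hmem
      have := hTsa.mem_spectrum_eq_re hmem
      simp [Complex.ext_iff] at this
    have h2 : IsUnit (algebraMap ℂ (H →L[ℂ] H) (-Complex.I) - T) :=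
      spectrum.notMem_iff.mp h1
    have h2' : IsUnit (algebraMap ℂ (H →L[ℂ] H) Complex.I) :=
      (isUnit_iff_ne_zero.mpr Complex.I_ne_zero).map (algebraMap ℂ (H →L[ℂ] H))
    have h3 : (algebraMap ℂ (H →L[ℂ] H) Complex.I) *
        (algebraMap ℂ (H →L[ℂ] H) (-Complex.I) - T) = 1 - Complex.I • T := by
      rw [mul_sub, ← map_mul, ← Algebra.smul_def]
      norm_num [Complex.I_mul_I]
    rw [← h3]
    exact h2'.mul h2
  obtain ⟨V, hV⟩ := hunit
  set W : H →L[ℂ] H := ((V⁻¹ : (H →L[ℂ] H)ˣ) : H →L[ℂ] H) with hWdef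
  have hV1 : ∀ x : H, W ((1 - Complex.I • T) x) = x := by
    intro x
    have h : (W * (1 - Complex.I • T)) x = (1 : H →L[ℂ] H) x := by
      rw [hWdef, ← hV, Units.inv_mul]
    simpa using h
  have hV2 : ∀ x : H, (1 - Complex.I • T) (W x) = x := by
    intro x
    have h : ((1 - Complex.I • T) * W) x = (1 : H →L[ℂ] H) x := by
      rw [hWdef, ← hV, Units.mul_inv]
    simpa using h
  refine ⟨W.comp T, ?_, ?_⟩
  · intro f
    set r := (W.comp T) f with hrdef
    have hr : r = W (T f) := rfl
    have key : r = T (f + Complex.I • r) := by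
      have h := hV2 (T f)
      simp only [ContinuousLinearMap.sub_apply, ContinuousLinearMap.one_apply,
        ContinuousLinearMap.smul_apply] at h
      rw [sub_eq_iff_eq_add] at h
      rw [map_add, map_smul, hr]
      exact h
    obtain ⟨hmem, heq⟩ := hT.1 (f + Complex.I • r)
    have hmem' : r ∈ A.domain := by rw [key]; exact hmem
    refine ⟨hmem', ?_⟩
    have hsub : (⟨r, hmem'⟩ : A.domain) = ⟨T (f + Complex.I • r), hmem⟩ :=
      Subtype.ext key
    have hAval : A ⟨T (f + Complex.I • r), hmem⟩ = f + Complex.I • r := by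
      simpa using heq
    rw [hsub, hAval]
    abel
  · intro u
    have hTAu : T ((A u : H)) = (u : H) := by
      have h := hT.2 u; simpa using h
    rw [ContinuousLinearMap.comp_apply, map_sub, hTAu, map_smul]
    have h : (u : H) - Complex.I • T u = (1 - Complex.I • T) (u : H) := by
      simp [ContinuousLinearMap.sub_apply]
    rw [h, hV1]

end Helpers

open scoped ComplexOrder in
/-- For self-adjoint operators that are uniformly coercive (`⟨A u, u⟩ ≥ c‖u‖²`), strong
resolvent convergence is equivalent to strong `G`-convergence `Aₙ⁻¹ f → A∞⁻¹ f`. -/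
theorem strongResolventConv_iff_strongGConv
    {H : Type*} [NormedAddCommGroup H] [InnerProductSpace ℂ H] [CompleteSpace H]
    [TopologicalSpace.SeparableSpace H]
    (c : ℝ) (hc : 0 < c) (A : ℕ → H →ₗ.[ℂ] H) (B : H →ₗ.[ℂ] H)
    (hA : ∀ n, IsSelfAdjoint (A n)) (hB : IsSelfAdjoint B)
    (hcoA : ∀ n, ∀ u : (A n).domain, ((c * ‖(u : H)‖ ^ 2 : ℝ) : ℂ) ≤ ⟪(A n) u, (u : H)⟫)
    (hcoB : ∀ u : B.domain, ((c * ‖(u : H)‖ ^ 2 : ℝ) : ℂ) ≤ ⟪B u, (u : H)⟫)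
    (Ainv : ℕ → H →L[ℂ] H) (Binv : H →L[ℂ] H)
    (hAinv : ∀ n, IsResolvent (A n) 0 (Ainv n)) (hBinv : IsResolvent B 0 Binv) :
    StrongResolventConv A B ↔
      ∀ f : H, Tendsto (fun n => Ainv n f) atTop (𝓝 (Binv f)) := by
  constructor
  · intro hsrc f
    choose R hR using fun n => exists_resolvent_I (hA n) (hAinv n)
    obtain ⟨S, hS⟩ := exists_resolvent_I hB hBinv
    have hconv := hsrc Complex.I (by norm_num [Complex.I_im]) R S hR hS
    set g := f + ((0 : ℂ) - Complex.I) • Binv f with hg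
    have hid : ∀ n, Ainv n f - Binv f =
        (R n g - S g) + ((0 : ℂ) - Complex.I) • Ainv n (R n g - S g) :=
      fun n => resolvent_diff_identity (hAinv n) (hR n) hBinv hS f g hg
    have hD : Tendsto (fun n => R n g - S g) atTop (𝓝 0) := by
      simpa using (hconv g).sub (tendsto_const_nhds (x := S g))
    have hD2 : Tendsto (fun n => ((0 : ℂ) - Complex.I) • Ainv n (R n g - S g))
        atTop (𝓝 0) := by
      apply squeeze_zero_norm (a := fun n => (1 / c) * ‖R n g - S g‖)
      · intro n
        rw [norm_smul]
        have hb := inv_norm_bound hc (hcoA n) (hAinv n) (R n g - S g)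
        have h1 : ‖((0 : ℂ) - Complex.I)‖ = 1 := by simp
        rw [h1, one_mul]
        calc ‖Ainv n (R n g - S g)‖ ≤ ‖R n g - S g‖ / c := hb
          _ = (1 / c) * ‖R n g - S g‖ := by ring
      · simpa using hD.norm.const_mul (1 / c)
    have hsum : Tendsto (fun n => Ainv n f - Binv f) atTop (𝓝 0) := by
      have h := hD.add hD2
      rw [add_zero] at h
      exact h.congr fun n => (hid n).symm
    have h := hsum.add (tendsto_const_nhds (x := Binv f))
    simpa using h
  · intro hG lam hlam R S hR hS u
    set g := u + (lam - 0) • S u with hg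
    have hid : ∀ n, R n u - S u =
        (Ainv n g - Binv g) + (lam - 0) • R n (Ainv n g - Binv g) :=
      fun n => resolvent_diff_identity (hR n) (hAinv n) hS hBinv u g hg
    have hD : Tendsto (fun n => Ainv n g - Binv g) atTop (𝓝 0) := by
      simpa using (hG g).sub (tendsto_const_nhds (x := Binv g))
    have hD2 : Tendsto (fun n => (lam - 0) • R n (Ainv n g - Binv g))
        atTop (𝓝 0) := by
      apply squeeze_zero_norm
        (a := fun n => (‖lam‖ / |lam.im|) * ‖Ainv n g - Binv g‖)
      · intro n
        rw [norm_smul, sub_zero]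
        have hb := resolvent_norm_bound (hA n) hlam (hR n) (Ainv n g - Binv g)
        calc ‖lam‖ * ‖R n (Ainv n g - Binv g)‖
            ≤ ‖lam‖ * (‖Ainv n g - Binv g‖ / |lam.im|) :=
              mul_le_mul_of_nonneg_left hb (norm_nonneg lam)
          _ = (‖lam‖ / |lam.im|) * ‖Ainv n g - Binv g‖ := by ring
      · simpa using hD.norm.const_mul (‖lam‖ / |lam.im|)
    have hsum : Tendsto (fun n => R n u - S u) atTop (𝓝 0) := by
      have h := hD.add hD2
      rw [add_zero] at h
      exact h.congr fun n => (hid n).symm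
    have h := hsum.add (tendsto_const_nhds (x := S u))
    simpa using h
end
end
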